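/- arXiv:1103.5861 — 2 statements merged into one kernel-verified Lean document; each statement's English description precedes it below -/
import Mathlib

section
/- Let r ≥ 1, let G = (g₁,…,g_r) be a system of polynomials with integer coefficients, let m₁,…,m_r ∈ ℕ, m := lcm[m₁,…,m_r], and M ∈ ℕ with m ∣ M. Define R_r^{(G)}(m₁,…,m_r) := (1/φ(M)) · ∑_{1 ≤ k ≤ M, gcd(k,M)=1} gcd(g₁(k), m₁) ⋯ gcd(g_r(k), m_r). Then R_r^{(G)}(m₁,…,m_r) = ∑_{d₁ ∣ m₁, …, d_r ∣ m_r} [φ(d₁) ⋯ φ(d_r) / φ(lcm[d₁,…,d_r])] · η_G(d₁,…,d_r), and this value is a positive integer; equivalently, ∑_{1 ≤ k ≤ M, gcd(k,M)=1} gcd(g₁(k), m₁) ⋯ gcd(g_r(k), m_r) is a positive integer multiple of φ(M). -/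
/-!
For `n ≠ 0`, `gcd(a, n) = ∑_{e ∣ n, e ∣ a} φ(e)`, so `∏ᵢ gcd(gᵢ(k), mᵢ)` expands into a sum of
`∏ᵢ φ(dᵢ)` over the tuples `d` with `dᵢ ∣ mᵢ` and `dᵢ ∣ gᵢ(k)`. Exchanging the two sums, the tuple
`d` is weighted by the number of units `k` modulo `M` with `dᵢ ∣ gᵢ(k)` for all `i`. This condition
only depends on `k` modulo `L = lcm d`, and reduction `(ℤ/M)ˣ → (ℤ/L)ˣ` is a surjective group
homomorphism, whose fibres all have `φ(M)/φ(L)` elements; hence the weight is `φ(M)/φ(L) · η_G(d)`.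
Integrality comes from `φ(gcd(a, b)) φ(lcm(a, b)) = φ(a) φ(b)`, which gives `φ(L) ∣ ∏ᵢ φ(dᵢ)`,
and positivity from every summand being at least `1`.
-/

open Finset

/-- `etaG g d` is the number of residues `x` modulo `lcm[d₁,…,d_r]` satisfying the
simultaneous congruences `gᵢ(x) ≡ 0 (mod dᵢ)` together with `gcd(x, dᵢ) = 1` for all `i`. -/
def etaG {r : ℕ} (g : Fin r → Polynomial ℤ) (d : Fin r → ℕ) : ℕ :=
  ((Finset.range (Finset.univ.lcm d)).filter
    (fun x : ℕ => (∀ i, (d i : ℤ) ∣ (g i).eval (x : ℤ)) ∧ ∀ i, Nat.gcd x (d i) = 1)).card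

open scoped Nat

namespace Nat

theorem totient_gcd_mul_totient_lcm (a b : ℕ) : φ (gcd a b) * φ (lcm a b) = φ a * φ b := by
  rcases (gcd a b).eq_zero_or_pos with hg | hg
  · simp [Nat.gcd_eq_zero_iff.1 hg]
  have h := totient_gcd_mul_totient_mul (gcd a b) (lcm a b)
  rw [Nat.gcd_eq_left ((gcd_dvd_left a b).trans (dvd_lcm_left a b)), gcd_mul_lcm,
    totient_gcd_mul_totient_mul] at h
  exact (Nat.eq_of_mul_eq_mul_right hg h).symm

theorem totient_finset_lcm_dvd_prod {ι : Type*} (s : Finset ι) (d : ι → ℕ) :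
    φ (s.lcm d) ∣ ∏ i ∈ s, φ (d i) := by
  classical
  induction s using Finset.induction with
  | empty => simp
  | insert a s ha ih =>
    rw [lcm_insert, prod_insert ha]
    exact (Dvd.intro_left _ (totient_gcd_mul_totient_lcm _ _)).trans (mul_dvd_mul_left _ ih)

theorem coprime_finset_lcm_iff {ι : Type*} {s : Finset ι} {d : ι → ℕ} {x : ℕ} :
    x.Coprime (s.lcm d) ↔ ∀ i ∈ s, x.Coprime (d i) :=
  ⟨fun h _ hi => h.coprime_dvd_right (dvd_lcm hi),
    fun h => (Coprime.prod_right h).coprime_dvd_right (lcm_dvd_prod s d)⟩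

end Nat

theorem Int.gcd_natCast_eq_sum_totient (a : ℤ) {n : ℕ} (hn : n ≠ 0) :
    Int.gcd a n = ∑ e ∈ n.divisors with ↑e ∣ a, φ e := by
  have hgn : Int.gcd a n ∣ n := by simpa [Int.gcd] using Nat.gcd_dvd_right a.natAbs n
  have : {e ∈ n.divisors | ↑e ∣ a} = {e ∈ n.divisors | e ∣ Int.gcd a n} := by
    refine filter_congr fun e he => ?_
    rw [Int.natCast_dvd, Int.gcd, Nat.dvd_gcd_iff, Int.natAbs_natCast]
    simp [(Nat.mem_divisors.1 he).1]
  rw [this, Nat.divisors_filter_dvd_of_dvd hn hgn, Nat.sum_totient]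

theorem prod_int_gcd_eq_sum_prod_totient {ι : Type*} [Fintype ι] [DecidableEq ι] (a : ι → ℤ)
    {m : ι → ℕ} (hm : ∀ i, m i ≠ 0) :
    ∏ i, Int.gcd (a i) (m i) =
      ∑ d ∈ Fintype.piFinset (fun i => (m i).divisors) with ∀ i, (d i : ℤ) ∣ a i, ∏ i, φ (d i) := by
  simp_rw [Int.gcd_natCast_eq_sum_totient _ (hm _), prod_univ_sum]
  congr 1
  ext d
  simp only [Fintype.mem_piFinset, mem_filter, forall_and]

theorem Polynomial.dvd_eval_sub_eval_of_dvd_sub {R : Type*} [CommRing R] (p : Polynomial R)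
    {n a b : R} (h : n ∣ a - b) : n ∣ p.eval a - p.eval b :=
  h.trans (sub_dvd_eval_sub a b p)

theorem Polynomial.dvd_eval_iff_of_dvd_sub (p : Polynomial ℤ) {n a b : ℤ} (h : n ∣ a - b) :
    n ∣ p.eval a ↔ n ∣ p.eval b :=
  Int.dvd_iff_dvd_of_dvd_sub (p.dvd_eval_sub_eval_of_dvd_sub h)

theorem Polynomial.gcd_eval_eq_of_dvd_sub (p : Polynomial ℤ) {n : ℕ} {a b : ℤ}
    (h : (n : ℤ) ∣ a - b) : Int.gcd (p.eval a) n = Int.gcd (p.eval b) n := by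
  obtain ⟨t, ht⟩ := p.dvd_eval_sub_eval_of_dvd_sub h
  rw [sub_eq_iff_eq_add'.1 ht, Int.gcd_add_mul_left_left]

theorem MonoidHom.card_mul_card_filter_comp {G H : Type*} [Group G] [Fintype G] [Monoid H]
    [Fintype H] [DecidableEq H] (f : G →* H) (hf : Function.Surjective f) (P : H → Prop)
    [DecidablePred P] :
    Fintype.card H * #{x | P (f x)} = Fintype.card G * #{y | P y} := by
  have hfiber (y : H) : Fintype.card H * #{x | f x = y} = Fintype.card G := by
    have hG : Fintype.card G = ∑ z, #{x | f x = z} := card_eq_sum_card_fiberwise (by simp)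
    rw [hG, sum_congr rfl fun z _ => card_fiber_eq_of_mem_range f (hf z) (hf y), sum_const,
      card_univ, smul_eq_mul]
  rw [card_eq_sum_card_fiberwise (f := f) (s := {x | P (f x)}) (t := {y | P y})
    fun x hx => by simpa using hx, mul_sum,
    card_eq_sum_ones {y | P y}, mul_sum]
  refine sum_congr rfl fun y hy => ?_
  rw [filter_filter, mul_one, ← hfiber y]
  congr 2
  ext x
  simp only [mem_filter, mem_univ, true_and] at hy ⊢
  exact ⟨And.right, fun h => ⟨h ▸ hy, h⟩⟩

theorem ZMod.card_units_filter_val (n : ℕ) [NeZero n] (P : ℕ → Prop) [DecidablePred P] :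
    #{u : (ZMod n)ˣ | P (u : ZMod n).val} = #{k ∈ range n | k.Coprime n ∧ P k} := by
  refine card_bij' (fun u _ => (u : ZMod n).val)
    (fun k hk => ZMod.unitOfCoprime k (mem_filter.1 hk).2.1) ?_ ?_ ?_ ?_
  · intro u hu
    simp only [mem_filter, mem_univ, true_and, mem_range] at hu ⊢
    exact ⟨ZMod.val_lt _, ZMod.val_coe_unit_coprime u, hu⟩
  · intro k hk
    simp only [mem_filter, mem_univ, true_and, mem_range] at hk ⊢
    rw [ZMod.coe_unitOfCoprime, ZMod.val_cast_of_lt hk.1]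
    exact hk.2.2
  · intro u _
    ext
    simp
  · intro k hk
    exact ZMod.val_cast_of_lt (mem_range.1 (mem_filter.1 hk).1)

theorem Nat.totient_mul_card_filter_coprime_of_periodic {L M : ℕ} (hLM : L ∣ M) (hM : M ≠ 0)
    (P : ℕ → Prop) [DecidablePred P] (hP : ∀ k, P (k % L) ↔ P k) :
    φ L * #{k ∈ range M | k.Coprime M ∧ P k} = φ M * #{k ∈ range L | k.Coprime L ∧ P k} := by
  have : NeZero M := ⟨hM⟩
  have : NeZero L := ⟨ne_zero_of_dvd_ne_zero hM hLM⟩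
  have hval (u : (ZMod M)ˣ) : (ZMod.unitsMap hLM u : ZMod L).val = (u : ZMod M).val % L := by
    rw [ZMod.unitsMap_val, ZMod.cast_eq_val, ZMod.val_natCast]
  rw [← ZMod.card_units_filter_val, ← ZMod.card_units_filter_val, ← ZMod.card_units_eq_totient,
    ← ZMod.card_units_eq_totient, ← MonoidHom.card_mul_card_filter_comp (ZMod.unitsMap hLM)
      (ZMod.unitsMap_surjective hLM)]
  simp_rw [hval, hP]

theorem sum_Icc_filter_coprime_eq_sum_range {R : Type*} [AddCancelCommMonoid R] {M : ℕ}
    (f : ℕ → R) (hf : f M = f 0) :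
    ∑ k ∈ Icc 1 M with k.gcd M = 1, f k = ∑ k ∈ range M with k.gcd M = 1, f k := by
  rw [sum_filter, sum_filter]
  set h : ℕ → R := fun k => if k.gcd M = 1 then f k else 0
  have h0 : h 0 = h M := by simp only [h, Nat.gcd_zero_left, Nat.gcd_self, hf]
  apply add_left_cancel (a := h 0)
  rw [h0, ← sum_range_succ_comm, range_eq_Ico, sum_eq_sum_Ico_succ_bot M.succ_pos, zero_add,
    Nat.succ_eq_add_one, Ico_add_one_right_eq_Icc, h0]

theorem totient_lcm_mul_card_filter_coprime_dvd_eval {r : ℕ} (g : Fin r → Polynomial ℤ)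
    (d : Fin r → ℕ) {M : ℕ} (hM : M ≠ 0) (hdM : univ.lcm d ∣ M) :
    φ (univ.lcm d) * #{k ∈ range M | k.Coprime M ∧ ∀ i, (d i : ℤ) ∣ (g i).eval ((k : ℕ) : ℤ)} =
      φ M * etaG g d := by
  rw [Nat.totient_mul_card_filter_coprime_of_periodic hdM hM]
  · congr 1
    rw [etaG]
    congr 1
    refine filter_congr fun k _ => ?_
    rw [Nat.coprime_finset_lcm_iff, and_comm]
    simp [Nat.Coprime]
  · intro k
    refine forall_congr' fun i => (g i).dvd_eval_iff_of_dvd_sub ?_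
    exact (Int.natCast_dvd_natCast.2 (dvd_lcm (mem_univ i))).trans
      (Nat.modEq_iff_dvd.1 (Nat.mod_modEq k _).symm)

theorem sum_range_coprime_prod_gcd_eq {r : ℕ} (g : Fin r → Polynomial ℤ) (m : Fin r → ℕ) {M : ℕ}
    (hM : M ≠ 0) (hmM : univ.lcm m ∣ M) :
    ∑ k ∈ range M with k.Coprime M, ∏ i, Int.gcd ((g i).eval ((k : ℕ) : ℤ)) (m i) =
      φ M * ∑ d ∈ Fintype.piFinset (fun i => (m i).divisors),
        (∏ i, φ (d i)) / φ (univ.lcm d) * etaG g d := by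
  have hm i : m i ≠ 0 := ne_zero_of_dvd_ne_zero hM ((dvd_lcm (mem_univ i)).trans hmM)
  have hterm (d : Fin r → ℕ) (hd : d ∈ Fintype.piFinset (fun i => (m i).divisors)) :
      #{k ∈ range M | k.Coprime M ∧ ∀ i, (d i : ℤ) ∣ (g i).eval ((k : ℕ) : ℤ)} * ∏ i, φ (d i) =
        φ M * ((∏ i, φ (d i)) / φ (univ.lcm d) * etaG g d) := by
    have hdM : univ.lcm d ∣ M := lcm_dvd fun i _ =>
      (Nat.mem_divisors.1 (Fintype.mem_piFinset.1 hd i)).1.trans ((dvd_lcm (mem_univ i)).trans hmM)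
    rw [mul_left_comm, ← totient_lcm_mul_card_filter_coprime_dvd_eval g d hM hdM]
    nth_rw 1 [← Nat.div_mul_cancel (Nat.totient_finset_lcm_dvd_prod univ d)]
    ring
  calc _ = ∑ k ∈ range M with k.Coprime M, ∑ d ∈ Fintype.piFinset (fun i => (m i).divisors)
          with ∀ i, (d i : ℤ) ∣ (g i).eval ((k : ℕ) : ℤ), ∏ i, φ (d i) :=
        sum_congr rfl fun k _ => by convert prod_int_gcd_eq_sum_prod_totient _ hm
    _ = ∑ d ∈ Fintype.piFinset (fun i => (m i).divisors), ∑ k ∈ range M with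
          k.Coprime M ∧ ∀ i, (d i : ℤ) ∣ (g i).eval ((k : ℕ) : ℤ), ∏ i, φ (d i) :=
        sum_comm' fun k d => by simp only [mem_filter]; tauto
    _ = _ := by
        rw [mul_sum]
        exact sum_congr rfl fun d hd => by rw [sum_const, smul_eq_mul, hterm d hd]

theorem stmt9_general (r : ℕ) (g : Fin r → Polynomial ℤ)
    (m : Fin r → ℕ) (M : ℕ) (hM0 : 0 < M)
    (hM : (Finset.univ.lcm m) ∣ M) :
    ((1 / (Nat.totient M : ℚ)) *
        ∑ k ∈ (Finset.Icc 1 M).filter (fun k => Nat.gcd k M = 1),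
          ((∏ i, Int.gcd ((g i).eval (k : ℤ)) (m i) : ℕ) : ℚ) =
      ∑ d ∈ Fintype.piFinset (fun i => (m i).divisors),
        (∏ i, (Nat.totient (d i) : ℚ)) / (Nat.totient (Finset.univ.lcm d) : ℚ) *
          (etaG g d : ℚ)) ∧
    (∃ c : ℕ, 0 < c ∧
      ∑ k ∈ (Finset.Icc 1 M).filter (fun k => Nat.gcd k M = 1),
          ∏ i, Int.gcd ((g i).eval (k : ℤ)) (m i) = Nat.totient M * c) := by
  have hmM i : m i ∣ M := (dvd_lcm (mem_univ i)).trans hM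
  have hsum := sum_range_coprime_prod_gcd_eq g m hM0.ne' hM
  rw [← sum_Icc_filter_coprime_eq_sum_range _ (prod_congr rfl fun i _ =>
    (g i).gcd_eval_eq_of_dvd_sub (by simpa using Int.natCast_dvd_natCast.2 (hmM i)))] at hsum
  set c := ∑ d ∈ Fintype.piFinset (fun i => (m i).divisors),
    (∏ i, φ (d i)) / φ (univ.lcm d) * etaG g d
  have hpos : 0 < ∑ k ∈ Icc 1 M with k.gcd M = 1, ∏ i, Int.gcd ((g i).eval (k : ℤ)) (m i) :=
    sum_pos (fun k _ => prod_pos fun i _ => Int.gcd_pos_of_ne_zero_right _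
      (by exact_mod_cast ne_zero_of_dvd_ne_zero hM0.ne' (hmM i)))
      ⟨1, mem_filter.2 ⟨mem_Icc.2 ⟨le_rfl, hM0⟩, Nat.gcd_one_left M⟩⟩
  refine ⟨?_, c, Nat.pos_of_mul_pos_left (hsum ▸ hpos), hsum⟩
  rw [← Nat.cast_sum, hsum, Nat.cast_mul, one_div,
    inv_mul_cancel_left₀ (by exact_mod_cast (Nat.totient_pos.2 hM0).ne')]
  push_cast [c, Nat.cast_div_charZero (Nat.totient_finset_lcm_dvd_prod _ _)]
  rfl

theorem stmt9 (r : ℕ) (hr : 1 ≤ r) (g : Fin r → Polynomial ℤ)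
    (m : Fin r → ℕ) (hm : ∀ i, 0 < m i) (M : ℕ) (hM0 : 0 < M)
    (hM : (Finset.univ.lcm m) ∣ M) :
    ((1 / (Nat.totient M : ℚ)) *
        ∑ k ∈ (Finset.Icc 1 M).filter (fun k => Nat.gcd k M = 1),
          ((∏ i, Int.gcd ((g i).eval (k : ℤ)) (m i) : ℕ) : ℚ) =
      ∑ d ∈ Fintype.piFinset (fun i => (m i).divisors),
        (∏ i, (Nat.totient (d i) : ℚ)) / (Nat.totient (Finset.univ.lcm d) : ℚ) *
          (etaG g d : ℚ)) ∧
    (∃ c : ℕ, 0 < c ∧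
      ∑ k ∈ (Finset.Icc 1 M).filter (fun k => Nat.gcd k M = 1),
          ∏ i, Int.gcd ((g i).eval (k : ℤ)) (m i) = Nat.totient M * c) :=
  stmt9_general r g m M hM0 hM
end

section
/- Let a₁, a₂ ∈ ℤ, let m₁, m₂ ∈ ℕ, m := lcm[m₁, m₂], and M ∈ ℕ with m ∣ M. Then (1/φ(M)) · ∑_{1 ≤ k ≤ M, gcd(k,M)=1} gcd(k − a₁, m₁) · gcd(k − a₂, m₂) = ∑ φ(gcd(d₁, d₂)), where the sum is over pairs (d₁, d₂) with d₁ ∣ m₁, d₂ ∣ m₂, gcd(d₁, a₁) = 1, gcd(d₂, a₂) = 1, and gcd(d₁, d₂) ∣ a₁ − a₂. -/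
/-!
Writing `gcd(n, m) = ∑_{d ∣ gcd(n, m)} φ(d)` turns the sum into
`∑_{d₁ ∣ m₁, d₂ ∣ m₂} φ(d₁) φ(d₂) N(d₁, d₂)`, where `N(d₁, d₂)` counts the units `k` mod `M` with
`k ≡ a₁ (mod d₁)` and `k ≡ a₂ (mod d₂)`. Such a unit forces `gcd(aᵢ, dᵢ) = 1` and
`gcd(d₁, d₂) ∣ a₁ - a₂`; conversely, under these conditions the Chinese remainder theorem gives one
class `b` modulo `L = lcm(d₁, d₂)`, prime to `L`, and the units lifting it form a fibre of the
surjection `(ℤ/M)ˣ → (ℤ/L)ˣ`, so `N = φ(M) / φ(L)`. Finally `φ(d₁) φ(d₂) = φ(gcd(d₁, d₂)) φ(L)`.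
-/

open Finset

theorem Int.gcd_natCast_eq_sum_totient_s13 (n : ℤ) {m : ℕ} (hm : m ≠ 0) :
    Int.gcd n m = ∑ d ∈ m.divisors with ((d : ℕ) : ℤ) ∣ n, d.totient := by
  rw [← Nat.sum_totient (Int.gcd n m)]
  congr 1
  ext d
  simp only [mem_filter, Nat.mem_divisors, Int.gcd, Int.natCast_dvd, Int.natAbs_natCast,
    Nat.dvd_gcd_iff, ne_eq, Nat.gcd_eq_zero_iff, hm, and_false, not_false_eq_true, and_true]
  tauto

theorem Nat.totient_gcd_mul_totient_lcm_s13 (a b : ℕ) :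
    (a.gcd b).totient * (a.lcm b).totient = a.totient * b.totient := by
  rcases Nat.eq_zero_or_pos (a.gcd b) with hg | hg
  · simp [Nat.gcd_eq_zero_iff.mp hg]
  have h := Nat.totient_gcd_mul_totient_mul (a.gcd b) (a.lcm b)
  rw [Nat.gcd_eq_left ((Nat.gcd_dvd_left a b).trans (Nat.dvd_lcm_left a b)), Nat.gcd_mul_lcm,
    Nat.totient_gcd_mul_totient_mul] at h
  exact Nat.eq_of_mul_eq_mul_right hg h.symm

theorem Int.exists_lcm_dvd_sub_iff {d₁ d₂ a₁ a₂ : ℤ} (h : (Int.gcd d₁ d₂ : ℤ) ∣ a₁ - a₂) :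
    ∃ b, ∀ k, (Int.lcm d₁ d₂ : ℤ) ∣ k - b ↔ d₁ ∣ k - a₁ ∧ d₂ ∣ k - a₂ := by
  obtain ⟨t, ht⟩ := h
  rw [Int.gcd_eq_gcd_ab] at ht
  refine ⟨a₁ - d₁ * d₁.gcdA d₂ * t, fun k => ?_⟩
  have h₁ : d₁ ∣ a₁ - d₁ * d₁.gcdA d₂ * t - a₁ := ⟨-(d₁.gcdA d₂ * t), by ring⟩
  have h₂ : d₂ ∣ a₁ - d₁ * d₁.gcdA d₂ * t - a₂ := ⟨d₁.gcdB d₂ * t, by linear_combination ht⟩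
  rw [Int.coe_lcm, _root_.lcm_dvd_iff, ← dvd_add_left h₁, ← dvd_add_left h₂, sub_add_sub_cancel,
    sub_add_sub_cancel]

theorem IsCoprime.of_dvd_sub {R : Type*} [CommRing R] {a b d : R} (h : IsCoprime a d)
    (hd : d ∣ b - a) : IsCoprime b d := by
  obtain ⟨t, ht⟩ := hd
  rw [sub_eq_iff_eq_add'.mp ht]
  exact h.add_mul_left_left t

theorem MonoidHom.card_fiber_mul_card_of_surjective {G H : Type*} [Group G] [Group H]
    [Fintype G] [Fintype H] [DecidableEq H] (f : G →* H) (hf : Function.Surjective f) (y : H) :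
    #{g | f g = y} * Fintype.card H = Fintype.card G := by
  have h := card_eq_sum_card_fiberwise (f := f) (s := univ) (t := univ) (by simp)
  rw [card_univ] at h
  rw [h, sum_congr rfl fun z _ => MonoidHom.card_fiber_eq_of_mem_range f (hf z) (hf y),
    sum_const, card_univ, smul_eq_mul, mul_comm]

theorem ZMod.card_filter_Icc_coprime_eq_card_units (M : ℕ) [NeZero M] (P : ZMod M → Prop)
    [DecidablePred P] : #{k ∈ Icc 1 M | Nat.Coprime k M ∧ P k} = #{u : (ZMod M)ˣ | P u} := by
  -- `(x - 1).val + 1` is the representative of `x` in `[1, M]`.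
  have cast_val : ∀ x : ZMod M, (((x - 1).val + 1 : ℕ) : ZMod M) = x := by simp
  have val_cast : ∀ k ∈ Icc 1 M, ((k : ZMod M) - 1).val + 1 = k := by
    intro k hk
    obtain ⟨hk₁, hkM⟩ := mem_Icc.1 hk
    rw [← Nat.sub_add_cancel hk₁, Nat.cast_add, Nat.cast_one, add_sub_cancel_right,
      ZMod.val_natCast, Nat.mod_eq_of_lt (by omega)]
  refine card_bij' (fun k hk => ZMod.unitOfCoprime k (mem_filter.1 hk).2.1)
    (fun u _ => ((u : ZMod M) - 1).val + 1) ?_ ?_ ?_ ?_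
  · intro k hk
    simpa using (mem_filter.1 hk).2.2
  · intro u hu
    refine mem_filter.2 ⟨mem_Icc.2 ⟨by omega, ZMod.val_lt _⟩, ?_, ?_⟩
    · rw [← ZMod.isUnit_iff_coprime, cast_val]
      exact u.isUnit
    · simpa [cast_val] using hu
  · intro k hk
    exact val_cast k (mem_filter.1 hk).1
  · intro u _
    ext
    simp [cast_val]

theorem ZMod.card_filter_Icc_coprime_dvd_sub_mul_totient {M L : ℕ} (hM : M ≠ 0) (hLM : L ∣ M)
    {b : ℤ} (hb : IsCoprime b L) :
    #{k ∈ Icc 1 M | Nat.Coprime k M ∧ (L : ℤ) ∣ k - b} * L.totient = M.totient := by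
  have : NeZero M := ⟨hM⟩
  have : NeZero L := ⟨fun hL => hM (Nat.eq_zero_of_zero_dvd (hL ▸ hLM))⟩
  have hfiber : #{k ∈ Icc 1 M | Nat.Coprime k M ∧ (L : ℤ) ∣ k - b} =
      #{u | ZMod.unitsMap hLM u = ZMod.unitOfIsCoprime b hb} := by
    calc #{k ∈ Icc 1 M | Nat.Coprime k M ∧ (L : ℤ) ∣ k - b}
        = #{k ∈ Icc 1 M | Nat.Coprime k M ∧ ((k : ZMod M).cast : ZMod L) = b} := by
          congr 1
          refine filter_congr fun k _ => and_congr_right fun _ => ?_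
          rw [ZMod.cast_natCast hLM, ← Int.cast_natCast (R := ZMod L) k,
            ZMod.intCast_eq_intCast_iff_dvd_sub, dvd_sub_comm]
      _ = #{u : (ZMod M)ˣ | ((u : ZMod M).cast : ZMod L) = b} :=
          ZMod.card_filter_Icc_coprime_eq_card_units M (fun x => (x.cast : ZMod L) = b)
      _ = _ := by simp only [Units.ext_iff, ZMod.unitsMap_val, ZMod.coe_unitOfIsCoprime]
  rw [hfiber, ← ZMod.card_units_eq_totient, ← ZMod.card_units_eq_totient]
  exact MonoidHom.card_fiber_mul_card_of_surjective _ (ZMod.unitsMap_surjective hLM) _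

theorem card_filter_coprime_dvd_sub_dvd_sub_mul_totient {M d₁ d₂ : ℕ} (hM : M ≠ 0)
    (h₁ : d₁ ∣ M) (h₂ : d₂ ∣ M) (a₁ a₂ : ℤ) :
    #{k ∈ Icc 1 M | Nat.Coprime k M ∧ (d₁ : ℤ) ∣ k - a₁ ∧ (d₂ : ℤ) ∣ k - a₂} *
        (d₁.totient * d₂.totient) =
      if Int.gcd a₁ d₁ = 1 ∧ Int.gcd a₂ d₂ = 1 ∧ (Nat.gcd d₁ d₂ : ℤ) ∣ a₁ - a₂ then
        (d₁.gcd d₂).totient * M.totient else 0 := by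
  split_ifs with hc
  · obtain ⟨hc₁, hc₂, hc₃⟩ := hc
    obtain ⟨b, hb⟩ := Int.exists_lcm_dvd_sub_iff (d₁ := d₁) (d₂ := d₂)
      (by rwa [Int.gcd_natCast_natCast])
    rw [Int.lcm_natCast_natCast] at hb
    have hbL : IsCoprime b (d₁.lcm d₂ : ℤ) := by
      obtain ⟨hb₁, hb₂⟩ := (hb b).1 (by simp)
      have hbd : IsCoprime b ((d₁ : ℤ) * d₂) :=
        ((Int.isCoprime_iff_gcd_eq_one.2 hc₁).of_dvd_sub hb₁).mul_right
          ((Int.isCoprime_iff_gcd_eq_one.2 hc₂).of_dvd_sub hb₂)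
      exact hbd.of_isCoprime_of_dvd_right (by exact_mod_cast Nat.lcm_dvd_mul d₁ d₂)
    simp_rw [← hb]
    rw [← Nat.totient_gcd_mul_totient_lcm_s13, ← ZMod.card_filter_Icc_coprime_dvd_sub_mul_totient hM
      (Nat.lcm_dvd h₁ h₂) hbL]
    ring
  · rw [card_eq_zero.2 (filter_eq_empty_iff.2 ?_), zero_mul]
    rintro k - ⟨hkM, hk₁, hk₂⟩
    refine hc ⟨?_, ?_, ?_⟩
    · exact Int.isCoprime_iff_gcd_eq_one.1 <|
        (Nat.isCoprime_iff_coprime.2 (hkM.coprime_dvd_right h₁)).of_dvd_sub (dvd_sub_comm.1 hk₁)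
    · exact Int.isCoprime_iff_gcd_eq_one.1 <|
        (Nat.isCoprime_iff_coprime.2 (hkM.coprime_dvd_right h₂)).of_dvd_sub (dvd_sub_comm.1 hk₂)
    · have hg₁ : ((d₁.gcd d₂ : ℕ) : ℤ) ∣ k - a₁ :=
        (Int.natCast_dvd_natCast.2 (d₁.gcd_dvd_left d₂)).trans hk₁
      have hg₂ : ((d₁.gcd d₂ : ℕ) : ℤ) ∣ k - a₂ :=
        (Int.natCast_dvd_natCast.2 (d₁.gcd_dvd_right d₂)).trans hk₂
      simpa using dvd_sub hg₂ hg₁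

theorem sum_gcd_sub_mul_gcd_sub {M m₁ m₂ : ℕ} (hM : M ≠ 0) (h₁ : m₁ ∣ M) (h₂ : m₂ ∣ M)
    (a₁ a₂ : ℤ) :
    ∑ k ∈ Icc 1 M with Nat.gcd k M = 1, Int.gcd ((k : ℤ) - a₁) m₁ * Int.gcd ((k : ℤ) - a₂) m₂ =
      M.totient * ∑ p ∈ m₁.divisors ×ˢ m₂.divisors with
        (Int.gcd a₁ p.1 = 1 ∧ Int.gcd a₂ p.2 = 1 ∧ (Nat.gcd p.1 p.2 : ℤ) ∣ a₁ - a₂),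
        (p.1.gcd p.2).totient := by
  have hm₁ : m₁ ≠ 0 := fun h => hM (Nat.eq_zero_of_zero_dvd (h ▸ h₁))
  have hm₂ : m₂ ≠ 0 := fun h => hM (Nat.eq_zero_of_zero_dvd (h ▸ h₂))
  calc ∑ k ∈ Icc 1 M with Nat.gcd k M = 1,
        Int.gcd ((k : ℤ) - a₁) m₁ * Int.gcd ((k : ℤ) - a₂) m₂
      = ∑ k ∈ Icc 1 M with Nat.gcd k M = 1, ∑ p ∈ m₁.divisors ×ˢ m₂.divisors,
          if (p.1 : ℤ) ∣ k - a₁ ∧ (p.2 : ℤ) ∣ k - a₂ then p.1.totient * p.2.totient else 0 := by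
        refine sum_congr rfl fun k _ => ?_
        rw [Int.gcd_natCast_eq_sum_totient_s13 _ hm₁, Int.gcd_natCast_eq_sum_totient_s13 _ hm₂,
          sum_filter, sum_filter, sum_mul_sum, sum_product]
        simp_rw [ite_zero_mul_ite_zero]
    _ = ∑ p ∈ m₁.divisors ×ˢ m₂.divisors,
          #{k ∈ Icc 1 M | Nat.Coprime k M ∧ (p.1 : ℤ) ∣ k - a₁ ∧ (p.2 : ℤ) ∣ k - a₂} *
            (p.1.totient * p.2.totient) := by
        rw [sum_comm]
        refine sum_congr rfl fun p _ => ?_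
        rw [← sum_filter, sum_const, smul_eq_mul, filter_filter]
    _ = _ := by
        rw [sum_filter, mul_sum]
        refine sum_congr rfl fun p hp => ?_
        obtain ⟨hp₁, hp₂⟩ := mem_product.1 hp
        rw [card_filter_coprime_dvd_sub_dvd_sub_mul_totient hM
          ((Nat.dvd_of_mem_divisors hp₁).trans h₁) ((Nat.dvd_of_mem_divisors hp₂).trans h₂)]
        split_ifs <;> ring

theorem stmt13_general (a₁ a₂ : ℤ) (m₁ m₂ : ℕ)
    (M : ℕ) (hM0 : 0 < M) (hM : Nat.lcm m₁ m₂ ∣ M) :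
    (1 / (Nat.totient M : ℚ)) *
        ∑ k ∈ (Finset.Icc 1 M).filter (fun k => Nat.gcd k M = 1),
          ((Int.gcd ((k : ℤ) - a₁) m₁ * Int.gcd ((k : ℤ) - a₂) m₂ : ℕ) : ℚ) =
      ∑ p ∈ (m₁.divisors ×ˢ m₂.divisors).filter
          (fun p => Int.gcd a₁ p.1 = 1 ∧ Int.gcd a₂ p.2 = 1 ∧
            ((Nat.gcd p.1 p.2 : ℤ) ∣ a₁ - a₂)),
        (Nat.totient (Nat.gcd p.1 p.2) : ℚ) := by
  have hφM : (M.totient : ℚ) ≠ 0 := by exact_mod_cast (Nat.totient_pos.2 hM0).ne'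
  rw [← Nat.cast_sum, sum_gcd_sub_mul_gcd_sub hM0.ne' ((Nat.dvd_lcm_left m₁ m₂).trans hM)
    ((Nat.dvd_lcm_right m₁ m₂).trans hM), Nat.cast_mul, Nat.cast_sum, one_div,
    inv_mul_cancel_left₀ hφM]

theorem stmt13 (a₁ a₂ : ℤ) (m₁ m₂ : ℕ) (h₁ : 0 < m₁) (h₂ : 0 < m₂)
    (M : ℕ) (hM0 : 0 < M) (hM : Nat.lcm m₁ m₂ ∣ M) :
    (1 / (Nat.totient M : ℚ)) *
        ∑ k ∈ (Finset.Icc 1 M).filter (fun k => Nat.gcd k M = 1),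
          ((Int.gcd ((k : ℤ) - a₁) m₁ * Int.gcd ((k : ℤ) - a₂) m₂ : ℕ) : ℚ) =
      ∑ p ∈ (m₁.divisors ×ˢ m₂.divisors).filter
          (fun p => Int.gcd a₁ p.1 = 1 ∧ Int.gcd a₂ p.2 = 1 ∧
            ((Nat.gcd p.1 p.2 : ℤ) ∣ a₁ - a₂)),
        (Nat.totient (Nat.gcd p.1 p.2) : ℚ) :=
  stmt13_general a₁ a₂ m₁ m₂ M hM0 hM
end
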